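/- arXiv:2308.05560 — 3 statements merged into one kernel-verified Lean document; each statement's English description precedes it below -/
import Mathlib

section
/- Let H be a Hilbert space and (x_n) a bounded sequence in H. If lim_{h→∞} limsup_{N→∞} |(1/N)∑_{n=1}^N ⟨x_{n+h}, x_n⟩| = 0, then ‖(1/N)∑_{n=1}^N x_n‖ → 0 as N → ∞. -/
/-!
Replacing `K • ∑_{n<N} y n` by the sum of its shifts `∑_{n<N} ∑_{h<K} y (n + h)` costs only
`O(K² B)` (boundary terms). By Cauchy–Schwarz, the square of the latter is at most
`N ∑_{h, h' < K} ‖∑_{n<N} ⟪y (n + h), y (n + h')⟫‖`, and each of these sums differs by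
`O(K B²)` from the correlation sum at lag `|h - h'|`. Every lag below `K` occurs at most `2K` times,
so `‖N⁻¹ ∑_{n<N} y n‖² ≤ O_K(1/N) + (4/K) ∑_{d<K} ‖N⁻¹ ∑_{n<N} ⟪y (n + d), y n⟫‖`.
As `N → ∞` the right side eventually drops below any bound exceeding four times the Cesàro mean
over `d < K` of the correlation limsups, and that mean tends to `0` as `K → ∞`.
-/

open Filter Finset
open scoped InnerProductSpace

theorem norm_sum_range_add_sub_sum_range_le {E : Type*} [SeminormedAddCommGroup E] {f : ℕ → E}
    {B : ℝ} (hf : ∀ n, ‖f n‖ ≤ B) (h N : ℕ) :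
    ‖∑ n ∈ range N, f (n + h) - ∑ n ∈ range N, f n‖ ≤ 2 * h * B := by
  have hsplit : ∑ n ∈ range N, f (n + h) - ∑ n ∈ range N, f n
      = ∑ n ∈ range h, f (n + N) - ∑ n ∈ range h, f n := by
    have h₁ := sum_range_add f h N
    have h₂ := sum_range_add f N h
    rw [add_comm N h, h₁] at h₂
    simp only [add_comm _ h, add_comm _ N] at h₂ ⊢
    rw [sub_eq_sub_iff_add_eq_add, add_comm, h₂, add_comm]
  have hshort : ∀ g : ℕ → E, (∀ n, ‖g n‖ ≤ B) → ‖∑ n ∈ range h, g n‖ ≤ h * B := fun g hg =>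
    (norm_sum_le_of_le _ fun n _ => hg n).trans_eq (by simp)
  calc _ ≤ ‖∑ n ∈ range h, f (n + N)‖ + ‖∑ n ∈ range h, f n‖ := hsplit ▸ norm_sub_le _ _
    _ ≤ h * B + h * B := add_le_add (hshort _ fun n => hf _) (hshort f hf)
    _ = 2 * h * B := by ring

theorem norm_nsmul_sum_range_le {E : Type*} [SeminormedAddCommGroup E] {f : ℕ → E}
    {B : ℝ} (hf : ∀ n, ‖f n‖ ≤ B) (K N : ℕ) :
    ‖K • ∑ n ∈ range N, f n‖ ≤ ‖∑ n ∈ range N, ∑ h ∈ range K, f (n + h)‖ + 2 * K ^ 2 * B := by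
  have hB : 0 ≤ B := (norm_nonneg _).trans (hf 0)
  set S := ∑ n ∈ range N, f n
  have hshift : ‖∑ h ∈ range K, (∑ n ∈ range N, f (n + h) - S)‖ ≤ 2 * K ^ 2 * B := by
    calc _ ≤ ∑ h ∈ range K, 2 * K * B := norm_sum_le_of_le _ fun h hh =>
          (norm_sum_range_add_sub_sum_range_le hf h N).trans (by gcongr; exact (mem_range.1 hh).le)
      _ = 2 * K ^ 2 * B := by rw [sum_const, card_range, nsmul_eq_mul]; ring
  have hsplit : K • S = ∑ n ∈ range N, ∑ h ∈ range K, f (n + h)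
      - ∑ h ∈ range K, (∑ n ∈ range N, f (n + h) - S) := by
    rw [sum_sub_distrib, sum_const, card_range, sum_comm, sub_sub_cancel]
  calc ‖K • S‖ ≤ _ := hsplit ▸ norm_sub_le _ _
    _ ≤ _ := by gcongr

theorem sum_range_comp_dist_le {γ : ℕ → ℝ} (hγ : ∀ d, 0 ≤ γ d) {h K : ℕ} (hh : h < K) :
    ∑ h' ∈ range K, γ (Nat.dist h h') ≤ 2 * ∑ d ∈ range K, γ d := by
  have hfiber : ∀ d, #{h' ∈ range K | Nat.dist h h' = d} ≤ 2 := fun d => by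
    refine (card_le_card (t := {h + d, h - d}) fun h' hh' => ?_).trans card_le_two
    have hd := (mem_filter.1 hh').2
    unfold Nat.dist at hd
    simp only [mem_insert, mem_singleton]
    omega
  have himage : (range K).image (Nat.dist h) ⊆ range K := by
    intro d hd
    simp only [mem_image, mem_range, Nat.dist] at hd ⊢
    omega
  rw [sum_comp, mul_sum]
  calc _ ≤ ∑ d ∈ (range K).image (Nat.dist h), 2 * γ d :=
        sum_le_sum fun d _ => by rw [nsmul_eq_mul]; gcongr; exacts [hγ d, mod_cast hfiber d]
    _ ≤ _ := sum_le_sum_of_subset_of_nonneg himage fun d _ _ => mul_nonneg zero_le_two (hγ d)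

theorem Filter.eventually_sum_le_sum_limsup_add {ι α : Type*} {l : Filter α} (s : Finset ι)
    {c : ι → α → ℝ} (hc : ∀ i ∈ s, IsBoundedUnder (· ≤ ·) l (c i)) {η : ℝ} (hη : 0 < η) :
    ∀ᶠ a in l, ∑ i ∈ s, c i a ≤ ∑ i ∈ s, (limsup (c i) l + η) := by
  filter_upwards [(eventually_all_finset s).2 fun i hi =>
    eventually_lt_of_limsup_lt (lt_add_of_pos_right _ hη) (hc i hi)] with a ha
  exact sum_le_sum fun i hi => (ha i hi).le

theorem Finset.sum_Icc_one_eq_sum_range {M : Type*} [AddCommMonoid M] (f : ℕ → M) (N : ℕ) :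
    ∑ n ∈ Icc 1 N, f n = ∑ n ∈ range N, f (n + 1) := by
  rw [range_eq_Ico, sum_Ico_add', zero_add, Ico_add_one_right_eq_Icc]

section InnerProductSpace

variable {𝕜 E : Type*} [RCLike 𝕜] [NormedAddCommGroup E] [InnerProductSpace 𝕜 E]
  {y : ℕ → E} {B : ℝ}

theorem norm_inner_le_sq_of_norm_le (hy : ∀ n, ‖y n‖ ≤ B) (m n : ℕ) : ‖⟪y m, y n⟫_𝕜‖ ≤ B ^ 2 :=
  (norm_inner_le_norm _ _).trans <| by
    rw [sq]; exact mul_le_mul (hy m) (hy n) (norm_nonneg _) ((norm_nonneg _).trans (hy m))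

theorem norm_sum_sum_range_sq_le (N K : ℕ) :
    ‖∑ n ∈ range N, ∑ h ∈ range K, y (n + h)‖ ^ 2
      ≤ N * ∑ h ∈ range K, ∑ h' ∈ range K, ‖∑ n ∈ range N, ⟪y (n + h), y (n + h')⟫_𝕜‖ := by
  have hexpand : ∀ n, ‖∑ h ∈ range K, y (n + h)‖ ^ 2
      = ∑ h ∈ range K, ∑ h' ∈ range K, RCLike.re ⟪y (n + h), y (n + h')⟫_𝕜 := fun n => by
    rw [@norm_sq_eq_re_inner 𝕜, sum_inner]
    simp only [inner_sum, map_sum]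
  calc _ ≤ (∑ n ∈ range N, ‖∑ h ∈ range K, y (n + h)‖) ^ 2 := by gcongr; exact norm_sum_le _ _
    _ ≤ N * ∑ n ∈ range N, ‖∑ h ∈ range K, y (n + h)‖ ^ 2 := by
        simpa using sq_sum_le_card_mul_sum_sq (s := range N)
    _ = N * ∑ h ∈ range K, ∑ h' ∈ range K,
          RCLike.re (∑ n ∈ range N, ⟪y (n + h), y (n + h')⟫_𝕜) := by
        simp only [hexpand, map_sum]
        rw [sum_comm]
        exact congrArg _ (sum_congr rfl fun h _ => sum_comm)
    _ ≤ _ := by gcongr; exact RCLike.re_le_norm _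

theorem norm_sum_inner_add_add_le_of_le (hy : ∀ n, ‖y n‖ ≤ B) {h h' : ℕ} (hle : h' ≤ h)
    (N : ℕ) :
    ‖∑ n ∈ range N, ⟪y (n + h), y (n + h')⟫_𝕜‖
      ≤ ‖∑ n ∈ range N, ⟪y (n + (h - h')), y n⟫_𝕜‖ + 2 * h' * B ^ 2 := by
  set q : ℕ → 𝕜 := fun m => ⟪y (m + (h - h')), y m⟫_𝕜
  have hq : ∑ n ∈ range N, ⟪y (n + h), y (n + h')⟫_𝕜 = ∑ n ∈ range N, q (n + h') :=
    sum_congr rfl fun n _ => by simp only [q, add_assoc, Nat.add_sub_cancel' hle]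
  rw [hq]
  refine (norm_le_norm_add_norm_sub' _ (∑ n ∈ range N, q n)).trans ?_
  gcongr
  exact norm_sum_range_add_sub_sum_range_le (fun m => norm_inner_le_sq_of_norm_le hy _ _) h' N

theorem norm_sum_inner_add_add_le (hy : ∀ n, ‖y n‖ ≤ B) (h h' N : ℕ) :
    ‖∑ n ∈ range N, ⟪y (n + h), y (n + h')⟫_𝕜‖
      ≤ ‖∑ n ∈ range N, ⟪y (n + Nat.dist h h'), y n⟫_𝕜‖ + 2 * min h h' * B ^ 2 := by
  rcases le_total h' h with hle | hle
  · rw [Nat.dist_eq_sub_of_le_right hle, min_eq_right hle]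
    exact norm_sum_inner_add_add_le_of_le hy hle N
  · have hswap : ‖∑ n ∈ range N, ⟪y (n + h), y (n + h')⟫_𝕜‖
        = ‖∑ n ∈ range N, ⟪y (n + h'), y (n + h)⟫_𝕜‖ := by
      rw [← RCLike.norm_conj, map_sum]
      simp only [inner_conj_symm]
    rw [hswap, Nat.dist_eq_sub_of_le hle, min_eq_left hle]
    exact norm_sum_inner_add_add_le_of_le hy hle N

theorem norm_sum_range_sq_le_vanDerCorput (hy : ∀ n, ‖y n‖ ≤ B) {K : ℕ} (hK : 0 < K) (N : ℕ) :
    ‖∑ n ∈ range N, y n‖ ^ 2 ≤ 8 * K ^ 2 * B ^ 2 + 4 * N * K * B ^ 2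
      + 4 * N / K * ∑ d ∈ range K, ‖∑ n ∈ range N, ⟪y (n + d), y n⟫_𝕜‖ := by
  set A := ∑ d ∈ range K, ‖∑ n ∈ range N, ⟪y (n + d), y n⟫_𝕜‖
  set U := ∑ n ∈ range N, ∑ h ∈ range K, y (n + h)
  have hK' : (0 : ℝ) < K := Nat.cast_pos.2 hK
  have hrow : ∀ h ∈ range K, ∑ h' ∈ range K, ‖∑ n ∈ range N, ⟪y (n + h), y (n + h')⟫_𝕜‖
      ≤ 2 * A + 2 * K ^ 2 * B ^ 2 := fun h hh => by
    calc _ ≤ ∑ h' ∈ range K,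
            (‖∑ n ∈ range N, ⟪y (n + Nat.dist h h'), y n⟫_𝕜‖ + 2 * K * B ^ 2) :=
          sum_le_sum fun h' _ => (norm_sum_inner_add_add_le hy h h' N).trans <| by
            gcongr; exact_mod_cast (min_le_left h h').trans (mem_range.1 hh).le
      _ ≤ 2 * A + 2 * K ^ 2 * B ^ 2 := by
          rw [sum_add_distrib, sum_const, card_range, nsmul_eq_mul]
          have := sum_range_comp_dist_le (fun d => norm_nonneg
            (∑ n ∈ range N, ⟪y (n + d), y n⟫_𝕜)) (mem_range.1 hh)
          nlinarith
  have hU : ‖U‖ ^ 2 ≤ N * (K * (2 * A + 2 * K ^ 2 * B ^ 2)) := by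
    refine (norm_sum_sum_range_sq_le (𝕜 := 𝕜) N K).trans ?_
    gcongr
    simpa only [sum_const, card_range, nsmul_eq_mul] using sum_le_sum hrow
  have hS : K * ‖∑ n ∈ range N, y n‖ ≤ ‖U‖ + 2 * K ^ 2 * B := by
    simpa [RCLike.norm_nsmul 𝕜] using norm_nsmul_sum_range_le hy K N
  rw [← mul_le_mul_iff_of_pos_left (pow_pos hK' 2)]
  calc (K : ℝ) ^ 2 * ‖∑ n ∈ range N, y n‖ ^ 2 ≤ (‖U‖ + 2 * K ^ 2 * B) ^ 2 := by
        rw [← mul_pow]; gcongr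
    _ ≤ 2 * ‖U‖ ^ 2 + 8 * K ^ 4 * B ^ 2 := by nlinarith [sq_nonneg (‖U‖ - 2 * K ^ 2 * B)]
    _ ≤ _ := by
        field_simp
        nlinarith

theorem norm_inv_natCast_mul_sum_inner_le (hy : ∀ n, ‖y n‖ ≤ B) (d N : ℕ) :
    ‖(N : 𝕜)⁻¹ * ∑ n ∈ range N, ⟪y (n + d), y n⟫_𝕜‖ ≤ B ^ 2 := by
  rcases N.eq_zero_or_pos with rfl | hN
  · simp [sq_nonneg]
  rw [norm_mul, norm_inv, RCLike.norm_natCast, inv_mul_le_iff₀ (Nat.cast_pos.2 hN)]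
  simpa using norm_sum_le_of_le (range N) fun n _ =>
    norm_inner_le_sq_of_norm_le (𝕜 := 𝕜) hy (n + d) n

theorem sq_norm_sum_range_div_le (hy : ∀ n, ‖y n‖ ≤ B) {K : ℕ} (hK : 0 < K) (N : ℕ) :
    (‖∑ n ∈ range N, y n‖ / N) ^ 2 ≤ (8 * K ^ 2 * B ^ 2 + 4 * K * B ^ 2) / N
      + 4 * ((K : ℝ)⁻¹ * ∑ d ∈ range K, ‖(N : 𝕜)⁻¹ * ∑ n ∈ range N, ⟪y (n + d), y n⟫_𝕜‖) := by
  rcases N.eq_zero_or_pos with rfl | hN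
  · simp
  have hN' : (1 : ℝ) ≤ N := Nat.one_le_cast.2 hN
  simp only [norm_mul, norm_inv, RCLike.norm_natCast, ← mul_sum]
  rw [div_pow, div_le_iff₀ (by positivity)]
  refine (norm_sum_range_sq_le_vanDerCorput (𝕜 := 𝕜) hy hK N).trans ?_
  have hB : (K : ℝ) ^ 3 * B ^ 2 ≤ K ^ 3 * B ^ 2 * N := le_mul_of_one_le_right (by positivity) hN'
  field_simp
  linarith

theorem tendsto_norm_sum_range_div_of_tendsto_limsup (hy : ∀ n, ‖y n‖ ≤ B)
    (hcorr : Tendsto (fun h => limsup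
      (fun N : ℕ => ‖(N : 𝕜)⁻¹ * ∑ n ∈ range N, ⟪y (n + h), y n⟫_𝕜‖) atTop) atTop (nhds 0)) :
    Tendsto (fun N : ℕ => ‖∑ n ∈ range N, y n‖ / N) atTop (nhds 0) := by
  set c : ℕ → ℕ → ℝ := fun d N => ‖(N : 𝕜)⁻¹ * ∑ n ∈ range N, ⟪y (n + d), y n⟫_𝕜‖
  suffices Tendsto (fun N : ℕ => (‖∑ n ∈ range N, y n‖ / N) ^ 2) atTop (nhds 0) by
    simpa [Real.sqrt_sq_eq_abs, abs_div] using this.sqrt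
  refine tendsto_order.2 ⟨fun a ha => .of_forall fun N => ha.trans_le (sq_nonneg _),
    fun ε hε => ?_⟩
  obtain ⟨K, hK, hKε⟩ := ((eventually_gt_atTop 0).and
    ((hcorr.cesaro.const_mul 4).eventually_lt_const (show (4 : ℝ) * 0 < ε / 3 by linarith))).exists
  filter_upwards [eventually_sum_le_sum_limsup_add (range K)
      (fun d _ => isBoundedUnder_of ⟨B ^ 2, norm_inv_natCast_mul_sum_inner_le (𝕜 := 𝕜) hy d⟩)
      (div_pos hε (by norm_num : (0 : ℝ) < 12)),
    (tendsto_const_div_atTop_nhds_zero_nat (8 * K ^ 2 * B ^ 2 + 4 * K * B ^ 2)).eventually_lt_const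
      (div_pos hε three_pos)]
    with N hsum herr
  calc (‖∑ n ∈ range N, y n‖ / N) ^ 2
      ≤ (8 * K ^ 2 * B ^ 2 + 4 * K * B ^ 2) / N + 4 * ((K : ℝ)⁻¹ * ∑ d ∈ range K, c d N) :=
        sq_norm_sum_range_div_le hy hK N
    _ ≤ (8 * K ^ 2 * B ^ 2 + 4 * K * B ^ 2) / N
        + 4 * ((K : ℝ)⁻¹ * ∑ d ∈ range K, (limsup (c d) atTop + ε / 12)) := by gcongr
    _ = (8 * K ^ 2 * B ^ 2 + 4 * K * B ^ 2) / N
        + 4 * ((K : ℝ)⁻¹ * ∑ d ∈ range K, limsup (c d) atTop) + ε / 3 := by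
        rw [sum_add_distrib, sum_const, card_range, nsmul_eq_mul]; field_simp; ring
    _ < ε := by linarith

end InnerProductSpace

theorem vdc_variant_ii_general
    {H : Type*} [NormedAddCommGroup H] [InnerProductSpace ℂ H]
    (x : ℕ → H) (hbdd : ∃ C : ℝ, ∀ n, ‖x n‖ ≤ C)
    (hyp : Tendsto
      (fun h : ℕ => Filter.limsup
        (fun N : ℕ => ‖((N : ℂ))⁻¹ * ∑ n ∈ Finset.Icc 1 N, ⟪x (n + h), x n⟫_ℂ‖)
        atTop)
      atTop (nhds 0)) :
    Tendsto (fun N : ℕ => ‖((N : ℝ))⁻¹ • ∑ n ∈ Finset.Icc 1 N, x n‖)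
      atTop (nhds 0) := by
  obtain ⟨C, hC⟩ := hbdd
  have hcorr : Tendsto (fun h => limsup (fun N : ℕ =>
      ‖(N : ℂ)⁻¹ * ∑ n ∈ range N, ⟪x (n + h + 1), x (n + 1)⟫_ℂ‖) atTop) atTop (nhds 0) := by
    simpa only [sum_Icc_one_eq_sum_range, add_right_comm _ 1] using hyp
  simpa only [norm_smul, norm_inv, Real.norm_natCast, inv_mul_eq_div, sum_Icc_one_eq_sum_range]
    using tendsto_norm_sum_range_div_of_tendsto_limsup (y := fun n => x (n + 1)) (fun n => hC _)
      hcorr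

theorem vdc_variant_ii
    {H : Type*} [NormedAddCommGroup H] [InnerProductSpace ℂ H] [CompleteSpace H]
    (x : ℕ → H) (hbdd : ∃ C : ℝ, ∀ n, ‖x n‖ ≤ C)
    (hyp : Tendsto
      (fun h : ℕ => Filter.limsup
        (fun N : ℕ => ‖((N : ℂ))⁻¹ * ∑ n ∈ Finset.Icc 1 N, ⟪x (n + h), x n⟫_ℂ‖)
        atTop)
      atTop (nhds 0)) :
    Tendsto (fun N : ℕ => ‖((N : ℝ))⁻¹ • ∑ n ∈ Finset.Icc 1 N, x n‖)
      atTop (nhds 0) :=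
  vdc_variant_ii_general x hbdd hyp
end

section
/- Let (X, B, ν) be a probability space, and let T and S be two measure-preserving ℤ-actions (or actions of a group G) on X with invariant σ-algebras I_T and I_S. Then for every bounded nonnegative measurable function h on X, ∫_X h · E[h | I_T] · E[h | I_S] dν ≥ (∫_X h dν)³. -/
open MeasureTheory Filter
open scoped ENNReal

/-!
Write `u = E[h | I_T]` and `v = E[h | I_S]`. As `√v` is `I_S`-measurable, `∫ h √v = ∫ v √v`, and
convexity of `t ↦ t ^ (3/2)` gives `∫ v √v ≥ (∫ v) ^ (3/2) = (∫ h) ^ (3/2)`. On the other hand the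
conditional Cauchy–Schwarz inequality `E[h √v | I_T] ^ 2 ≤ u · E[h v | I_T]`, integrated and
combined with `(∫ φ) ^ 2 ≤ ∫ φ ^ 2`, gives `(∫ h √v) ^ 2 ≤ ∫ u · E[h v | I_T] = ∫ h u v`.
-/

def invariantSigmaAlgebra {X : Type*} (m : MeasurableSpace X) (T : X → X) :
    MeasurableSpace X where
  MeasurableSet' s := m.MeasurableSet' s ∧ T ⁻¹' s = s
  measurableSet_empty := ⟨m.measurableSet_empty, by simp⟩
  measurableSet_compl := fun s hs => ⟨m.measurableSet_compl s hs.1, by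
    rw [Set.preimage_compl, hs.2]⟩
  measurableSet_iUnion := fun f hf => ⟨m.measurableSet_iUnion _ fun i => (hf i).1, by
    rw [Set.preimage_iUnion]; simp [fun i => (hf i).2]⟩

theorem invariantSigmaAlgebra_le {X : Type*} (m : MeasurableSpace X) (T : X → X) :
    invariantSigmaAlgebra m T ≤ m :=
  fun _ hs ↦ hs.1

theorem discrim_le_zero_of_forall_rat {a b c : ℝ} (h : ∀ q : ℚ, 0 ≤ a * (q * q) + b * q + c) :
    discrim a b c ≤ 0 :=
  discrim_le_zero fun t ↦ Rat.denseRange_cast.induction_on t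
    (isClosed_le continuous_const (by fun_prop)) h

section

variable {X : Type*} {m m₀ : MeasurableSpace X} {μ : Measure[m₀] X} {f g : X → ℝ}

theorem sq_integral_le_integral_sq [IsProbabilityMeasure μ] (hf : MemLp f 2 μ) :
    (∫ x, f x ∂μ) ^ 2 ≤ ∫ x, f x ^ 2 ∂μ := by
  have := ProbabilityTheory.variance_nonneg f μ
  rw [ProbabilityTheory.variance_eq_sub hf] at this
  simpa using this

theorem cube_integral_le_sq_integral_mul_sqrt [IsProbabilityMeasure μ] (hf₀ : 0 ≤ᵐ[μ] f)
    (hf : Integrable f μ) (hff : Integrable (fun x ↦ f x * √(f x)) μ) :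
    (∫ x, f x ∂μ) ^ 3 ≤ (∫ x, f x * √(f x) ∂μ) ^ 2 := by
  set a := ∫ x, f x ∂μ
  set b := √a
  have hb : b ^ 2 = a := Real.sq_sqrt (integral_nonneg_of_ae hf₀)
  -- the tangent line of `t ↦ t ^ (3/2)` at `a`, doubled
  have tangent : ∀ᵐ x ∂μ, 3 * b * f x - b ^ 3 ≤ 2 * (f x * √(f x)) := by
    filter_upwards [hf₀] with x (hx : 0 ≤ f x)
    have key : 2 * (f x * √(f x)) - (3 * b * f x - b ^ 3)
        = (√(f x) - b) ^ 2 * (2 * √(f x) + b) := by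
      linear_combination (3 * b - 2 * √(f x)) * Real.sq_sqrt hx
    linarith [mul_nonneg (sq_nonneg (√(f x) - b)) (by positivity : 0 ≤ 2 * √(f x) + b)]
  have hlower : ∫ x, (3 * b * f x - b ^ 3) ∂μ = 2 * b ^ 3 := by
    rw [integral_sub (hf.const_mul _) (integrable_const _), integral_const_mul, integral_const,
      probReal_univ, one_smul]
    change 3 * b * a - b ^ 3 = 2 * b ^ 3
    rw [← hb]
    ring
  have hcube : b ^ 3 ≤ ∫ x, f x * √(f x) ∂μ := by
    have := integral_mono_ae (f := fun x ↦ 3 * b * f x - b ^ 3)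
      ((hf.const_mul (3 * b)).sub (integrable_const (b ^ 3))) (hff.const_mul 2) tangent
    rw [hlower, integral_const_mul] at this
    linarith
  calc a ^ 3 = (b ^ 3) ^ 2 := by rw [← hb]; ring
    _ ≤ _ := pow_le_pow_left₀ (by positivity) hcube 2

theorem condExp_mul_sq_le (hf₀ : 0 ≤ᵐ[μ] f) (hf : Integrable f μ) (hfg : Integrable (f * g) μ)
    (hfg₂ : Integrable (f * g ^ 2) μ) :
    ∀ᵐ x ∂μ, μ[f * g | m] x ^ 2 ≤ μ[f | m] x * μ[f * g ^ 2 | m] x := by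
  -- only rational `q`, so that the inequalities `E[f (g - q) ^ 2 | m] ≥ 0` hold simultaneously a.e.
  have quadratic (q : ℚ) :
      ∀ᵐ x ∂μ, 0 ≤ μ[f | m] x * (q * q) + -2 * μ[f * g | m] x * q + μ[f * g ^ 2 | m] x := by
    have expand : (fun x ↦ f x * (g x - q) ^ 2)
        = f * g ^ 2 - (2 * q : ℝ) • (f * g) + (q ^ 2 : ℝ) • f := by
      ext x
      simp only [Pi.mul_apply, Pi.pow_apply, Pi.sub_apply, Pi.add_apply, Pi.smul_apply,
        smul_eq_mul]
      ring
    have hnonneg : 0 ≤ᵐ[μ] μ[fun x ↦ f x * (g x - q) ^ 2 | m] :=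
      condExp_nonneg (hf₀.mono fun x hx ↦ mul_nonneg hx (sq_nonneg _))
    rw [expand] at hnonneg
    filter_upwards [hnonneg,
      condExp_add (hfg₂.sub (hfg.smul (2 * q : ℝ))) (hf.smul (q ^ 2 : ℝ)) m,
      condExp_sub hfg₂ (hfg.smul (2 * q : ℝ)) m, condExp_smul (2 * q : ℝ) (f * g) m,
      condExp_smul (q ^ 2 : ℝ) f m] with x hx h₁ h₂ h₃ h₄
    simp only [h₁, h₂, h₃, h₄, Pi.add_apply, Pi.sub_apply, Pi.smul_apply, smul_eq_mul,
      Pi.zero_apply] at hx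
    linarith
  filter_upwards [ae_all_iff.2 quadratic, condExp_nonneg (m := m) hf₀] with x hx hx₀
  have := discrim_le_zero_of_forall_rat hx
  rw [discrim] at this
  nlinarith

theorem integral_mul_condExp_of_stronglyMeasurable (hm : m ≤ m₀) [SigmaFinite (μ.trim hm)]
    (hg : StronglyMeasurable[m] g) (hf : Integrable f μ) (hgf : Integrable (g * f) μ) :
    ∫ x, g x * μ[f | m] x ∂μ = ∫ x, g x * f x ∂μ :=
  calc ∫ x, g x * μ[f | m] x ∂μ = ∫ x, μ[g * f | m] x ∂μ :=
        integral_congr_ae (condExp_mul_of_stronglyMeasurable_left hg hgf hf).symm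
    _ = ∫ x, g x * f x ∂μ := integral_condExp hm

theorem sq_integral_mul_le_integral_mul_condExp_mul_sq [IsProbabilityMeasure μ] (hm : m ≤ m₀)
    (hf₀ : 0 ≤ᵐ[μ] f) (hf : MemLp f ∞ μ) (hg : MemLp g ∞ μ) :
    (∫ x, f x * g x ∂μ) ^ 2 ≤ ∫ x, f x * μ[f | m] x * g x ^ 2 ∂μ := by
  have hfg : MemLp (f * g) ∞ μ := hg.mul hf
  have hfg₂ : MemLp (f * g ^ 2) ∞ μ := by rw [sq]; exact (hg.mul (r := ∞) hg).mul hf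
  have hcf : MemLp μ[f | m] ∞ μ := hf.condExp le_top
  have hcfg : MemLp μ[f * g | m] 2 μ := (hfg.condExp le_top).mono_exponent le_top
  calc (∫ x, f x * g x ∂μ) ^ 2 = (∫ x, μ[f * g | m] x ∂μ) ^ 2 := by
        rw [integral_condExp hm]; rfl
    _ ≤ ∫ x, μ[f * g | m] x ^ 2 ∂μ := sq_integral_le_integral_sq hcfg
    _ ≤ ∫ x, μ[f | m] x * μ[f * g ^ 2 | m] x ∂μ :=
      integral_mono_ae hcfg.integrable_sq (((hfg₂.condExp le_top).mul hcf).integrable le_top)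
        (condExp_mul_sq_le hf₀ (hf.integrable le_top) (hfg.integrable le_top)
          (hfg₂.integrable le_top))
    _ = ∫ x, μ[f | m] x * (f * g ^ 2) x ∂μ :=
      integral_mul_condExp_of_stronglyMeasurable hm stronglyMeasurable_condExp
        (hfg₂.integrable le_top) ((hfg₂.mul hcf).integrable le_top)
    _ = ∫ x, f x * μ[f | m] x * g x ^ 2 ∂μ := by
      congr 1 with x
      simp only [Pi.mul_apply, Pi.pow_apply]
      ring

theorem cube_integral_le_integral_mul_condExp_mul_condExp [IsProbabilityMeasure μ]
    {m₁ m₂ : MeasurableSpace X} (hm₁ : m₁ ≤ m₀) (hm₂ : m₂ ≤ m₀) (hf₀ : 0 ≤ᵐ[μ] f)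
    (hf : MemLp f ∞ μ) :
    (∫ x, f x ∂μ) ^ 3 ≤ ∫ x, f x * μ[f | m₁] x * μ[f | m₂] x ∂μ := by
  set v := μ[f | m₂]
  have hv₀ : 0 ≤ᵐ[μ] v := condExp_nonneg hf₀
  have hv : MemLp v ∞ μ := hf.condExp le_top
  have hsqrt : MemLp (fun x ↦ √(v x)) ∞ μ := by
    refine (hv.add (memLp_top_const 1)).of_le hv.1.aemeasurable.sqrt.aestronglyMeasurable ?_
    filter_upwards [hv₀] with x (hx : 0 ≤ v x)
    rw [Real.norm_of_nonneg (Real.sqrt_nonneg _), Pi.add_apply,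
      Real.norm_of_nonneg (by linarith)]
    nlinarith [Real.sq_sqrt hx, Real.sqrt_nonneg (v x)]
  calc (∫ x, f x ∂μ) ^ 3 = (∫ x, v x ∂μ) ^ 3 := by rw [integral_condExp hm₂]
    _ ≤ (∫ x, v x * √(v x) ∂μ) ^ 2 :=
      cube_integral_le_sq_integral_mul_sqrt hv₀ (hv.integrable le_top)
        ((hsqrt.mul hv).integrable le_top)
    _ = (∫ x, f x * √(v x) ∂μ) ^ 2 := by
      simp only [mul_comm _ (√_)]
      rw [integral_mul_condExp_of_stronglyMeasurable hm₂
        (Real.continuous_sqrt.comp_stronglyMeasurable stronglyMeasurable_condExp)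
        (hf.integrable le_top) ((hf.mul hsqrt).integrable le_top)]
    _ ≤ ∫ x, f x * μ[f | m₁] x * √(v x) ^ 2 ∂μ :=
      sq_integral_mul_le_integral_mul_condExp_mul_sq hm₁ hf₀ hf hsqrt
    _ = ∫ x, f x * μ[f | m₁] x * v x ∂μ :=
      integral_congr_ae (hv₀.mono fun x hx ↦ by simp only [Real.sq_sqrt hx])

end

theorem chu_positivity_general
    {X : Type*} [m : MeasurableSpace X] (ν : Measure X) [IsProbabilityMeasure ν]
    (T S : X → X)
    (h : X → ℝ) (hmeas : Measurable h) (hpos : ∀ x, 0 ≤ h x)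
    (hbdd : ∃ C : ℝ, ∀ x, h x ≤ C) :
    (∫ x, h x ∂ν) ^ 3 ≤
      ∫ x, h x * (MeasureTheory.condExp (invariantSigmaAlgebra m T) ν h x) *
        (MeasureTheory.condExp (invariantSigmaAlgebra m S) ν h x) ∂ν := by
  obtain ⟨C, hC⟩ := hbdd
  have hh : MemLp h ∞ ν := memLp_top_of_bound hmeas.aestronglyMeasurable C
    (ae_of_all _ fun x ↦ (Real.norm_of_nonneg (hpos x)).trans_le (hC x))
  exact cube_integral_le_integral_mul_condExp_mul_condExp (invariantSigmaAlgebra_le m T)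
    (invariantSigmaAlgebra_le m S) (ae_of_all _ hpos) hh

/-- Chu's positivity inequality: for a bounded nonnegative function `h` and two
measure-preserving transformations `T`, `S` of a probability space,
`∫ h · E[h|I_T] · E[h|I_S] ≥ (∫ h)³`. -/
theorem chu_positivity
    {X : Type*} [m : MeasurableSpace X] (ν : Measure X) [IsProbabilityMeasure ν]
    (T S : X → X) (hT : MeasurePreserving T ν ν) (hS : MeasurePreserving S ν ν)
    (h : X → ℝ) (hmeas : Measurable h) (hpos : ∀ x, 0 ≤ h x)
    (hbdd : ∃ C : ℝ, ∀ x, h x ≤ C) :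
    (∫ x, h x ∂ν) ^ 3 ≤
      ∫ x, h x * (MeasureTheory.condExp (invariantSigmaAlgebra m T) ν h x) *
        (MeasureTheory.condExp (invariantSigmaAlgebra m S) ν h x) ∂ν :=
  chu_positivity_general (m := m) ν T S h hmeas hpos hbdd
end

section
/- Let G be a countable group, (F_N) a Følner sequence, and H a Hilbert space. Fix bounded maps making all relevant Cesàro limits exist along a subsequence (F_{N_q}); let 𝓗 denote the resulting space of square-averageable sequences modulo null sequences, with inner product ⟨x,y⟩_𝓗 = lim_q (1/|F_{N_q}|)∑_{g∈F_{N_q}} ⟨x(g), y(g)⟩. Then 𝓗 is complete: every Cauchy sequence (ξ_m) in 𝓗 admits a limit ξ with lim_m lim_q (1/|F_{N_q}|)∑_{g∈F_{N_q}} ‖ξ_m(g) − ξ(g)‖² = 0. -/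
/-!
A Følner sequence either has `#F n → ∞` (when `G` is infinite: if right translation by every
element of a set `T` moves `F n` by less than one point, `F n` contains a left translate of `T`)
or is eventually all of `G` (when `G` is finite). In the finite case the averaged seminorm is a
norm on the finite product `G → H`, and the limit is taken pointwise.

In the infinite case pass to a subsequence `x l` with `sqAvg (A q) (x l - x (l + 1)) ≤ 4⁻ˡ` for
`q ≥ Q l`, and glue: `ζ g = x (c g) g` for a stage index `c` such that a point with `c g > l`
only enters averages with `q ≥ Q l`, where the `l`-th increment is already small. A weighted
telescoping bound then controls `x j - ζ` on `{c ≥ j}` uniformly in `q`, while the points with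
`c g < j` form a finite set, whose share of the average vanishes as `#A q → ∞`.
-/

open Filter Finset Topology

theorem norm_add_sq_le_two_mul {E : Type*} [SeminormedAddGroup E] (a b : E) :
    ‖a + b‖ ^ 2 ≤ 2 * (‖a‖ ^ 2 + ‖b‖ ^ 2) :=
  (pow_le_pow_left₀ (norm_nonneg _) (norm_add_le a b) 2).trans add_sq_le

theorem sum_Ico_half_pow_le (j c : ℕ) : ∑ l ∈ Ico j c, (1 / 2 : ℝ) ^ l ≤ 2 * (1 / 2) ^ j :=
  (geom_sum_Ico_le_of_lt_one (by norm_num) (by norm_num)).trans_eq (by ring)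

/-- Cauchy–Schwarz against the weights `2⁻ˡ`, whose sum over `l ≥ j` is at most `2 * 2⁻ʲ`. -/
theorem norm_sub_sq_le_weighted_sum {E : Type*} [SeminormedAddCommGroup E] (x : ℕ → E)
    {j c : ℕ} (hjc : j ≤ c) :
    ‖x j - x c‖ ^ 2 ≤ 2 * (1 / 2) ^ j * ∑ l ∈ Ico j c, 2 ^ l * ‖x l - x (l + 1)‖ ^ 2 := by
  have hsum : ‖x j - x c‖ ≤ ∑ l ∈ Ico j c, ‖x l - x (l + 1)‖ := by
    simpa only [dist_eq_norm] using dist_le_Ico_sum_dist x hjc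
  have hcs : (∑ l ∈ Ico j c, ‖x l - x (l + 1)‖) ^ 2 ≤
      (∑ l ∈ Ico j c, (1 / 2 : ℝ) ^ l) * ∑ l ∈ Ico j c, 2 ^ l * ‖x l - x (l + 1)‖ ^ 2 :=
    sum_sq_le_sum_mul_sum_of_sq_le_mul _ (fun _ _ => by positivity) (fun _ _ => by positivity)
      fun l _ => by rw [← mul_assoc, ← mul_pow]; norm_num
  calc ‖x j - x c‖ ^ 2 ≤ (∑ l ∈ Ico j c, ‖x l - x (l + 1)‖) ^ 2 :=
        pow_le_pow_left₀ (norm_nonneg _) hsum 2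
    _ ≤ _ := hcs.trans (mul_le_mul_of_nonneg_right (sum_Ico_half_pow_le j c) (by positivity))

section SquareAverages

variable {G H : Type*} [SeminormedAddCommGroup H]

noncomputable def sqAvg (s : Finset G) (u : G → H) : ℝ :=
  (#s : ℝ)⁻¹ * ∑ g ∈ s, ‖u g‖ ^ 2

theorem sqAvg_nonneg (s : Finset G) (u : G → H) : 0 ≤ sqAvg s u := by
  unfold sqAvg; positivity

theorem card_mul_sqAvg (s : Finset G) (u : G → H) :
    #s * sqAvg s u = ∑ g ∈ s, ‖u g‖ ^ 2 := by
  rcases s.eq_empty_or_nonempty with rfl | hs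
  · simp
  · rw [sqAvg, mul_inv_cancel_left₀ (by positivity)]

theorem sqAvg_le_sum (s : Finset G) (u : G → H) : sqAvg s u ≤ ∑ g ∈ s, ‖u g‖ ^ 2 :=
  mul_le_of_le_one_left (by positivity) (Nat.cast_inv_le_one _)

theorem sqAvg_add_le (s : Finset G) (u v : G → H) :
    sqAvg s (u + v) ≤ 2 * sqAvg s u + 2 * sqAvg s v := by
  calc sqAvg s (u + v) ≤ (#s : ℝ)⁻¹ * ∑ g ∈ s, 2 * (‖u g‖ ^ 2 + ‖v g‖ ^ 2) := by
        unfold sqAvg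
        gcongr with g
        exact norm_add_sq_le_two_mul (u g) (v g)
    _ = 2 * sqAvg s u + 2 * sqAvg s v := by
        simp only [sqAvg, ← mul_sum, sum_add_distrib]
        ring

theorem sqAvg_neg (s : Finset G) (u : G → H) : sqAvg s (-u) = sqAvg s u := by
  simp [sqAvg]

theorem sqAvg_sub_le (s : Finset G) (u v w : G → H) :
    sqAvg s (u - w) ≤ 2 * sqAvg s (u - v) + 2 * sqAvg s (v - w) := by
  simpa only [sub_add_sub_cancel] using sqAvg_add_le s (u - v) (v - w)

theorem norm_sq_le_card_mul_sqAvg_univ [Fintype G] (u : G → H) (g : G) :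
    ‖u g‖ ^ 2 ≤ Fintype.card G * sqAvg univ u := by
  rw [← card_univ, card_mul_sqAvg]
  exact single_le_sum (f := fun g => ‖u g‖ ^ 2) (fun _ _ => by positivity) (mem_univ g)

def SquareAverageable (A : ℕ → Finset G) (u : G → H) : Prop :=
  BddAbove (Set.range fun q => sqAvg (A q) u)

/-- The square of the seminorm of the space `𝓗` of square-averageable sequences. -/
noncomputable def limsupSqAvg (A : ℕ → Finset G) (u : G → H) : ℝ :=
  limsup (fun q => sqAvg (A q) u) atTop

def IsSqAvgCauchy (A : ℕ → Finset G) (ξ : ℕ → G → H) : Prop :=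
  ∀ ε > 0, ∃ M, ∀ m ≥ M, ∀ k ≥ M, limsupSqAvg A (ξ m - ξ k) < ε

variable {A : ℕ → Finset G}

theorem SquareAverageable.add {u v : G → H} (hu : SquareAverageable A u)
    (hv : SquareAverageable A v) : SquareAverageable A (u + v) := by
  obtain ⟨a, ha⟩ := hu
  obtain ⟨b, hb⟩ := hv
  refine ⟨2 * a + 2 * b, Set.forall_mem_range.2 fun q => ?_⟩
  have := ha (Set.mem_range_self q)
  have := hb (Set.mem_range_self q)
  linarith [sqAvg_add_le (A q) u v]

theorem SquareAverageable.neg {u : G → H} (hu : SquareAverageable A u) :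
    SquareAverageable A (-u) := by
  simpa only [SquareAverageable, sqAvg_neg] using hu

theorem SquareAverageable.sub {u v : G → H} (hu : SquareAverageable A u)
    (hv : SquareAverageable A v) : SquareAverageable A (u - v) := by
  simpa only [sub_eq_add_neg] using hu.add hv.neg

theorem SquareAverageable.of_fintype [Fintype G] (u : G → H) : SquareAverageable A u :=
  ⟨∑ g, ‖u g‖ ^ 2, Set.forall_mem_range.2 fun _ =>
    (sqAvg_le_sum _ u).trans (sum_le_univ_sum_of_nonneg fun _ => by positivity)⟩

theorem limsupSqAvg_nonneg {u : G → H} (hu : SquareAverageable A u) : 0 ≤ limsupSqAvg A u :=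
  le_limsup_of_frequently_le (Frequently.of_forall fun _ => sqAvg_nonneg _ u)
    hu.isBoundedUnder_of_range

theorem SquareAverageable.eventually_lt_of_limsupSqAvg_lt {u : G → H}
    (hu : SquareAverageable A u) {ε : ℝ} (h : limsupSqAvg A u < ε) :
    ∀ᶠ q in atTop, sqAvg (A q) u < ε :=
  eventually_lt_of_limsup_lt h hu.isBoundedUnder_of_range

theorem limsupSqAvg_le_of_eventually_le {u : G → H} {ε : ℝ}
    (h : ∀ᶠ q in atTop, sqAvg (A q) u ≤ ε) : limsupSqAvg A u ≤ ε :=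
  limsup_le_of_le (isBoundedUnder_of ⟨0, fun _ => sqAvg_nonneg _ u⟩).isCoboundedUnder_le h

variable {ξ : ℕ → G → H}

theorem tendsto_limsupSqAvg_of_frequently (hSA : ∀ m, SquareAverageable A (ξ m))
    (hCauchy : IsSqAvgCauchy A ξ) {ζ : G → H}
    (hζ : ∀ ε > 0, ∃ᶠ m in atTop,
      SquareAverageable A (ξ m - ζ) ∧ ∀ᶠ q in atTop, sqAvg (A q) (ξ m - ζ) < ε) :
    SquareAverageable A ζ ∧ Tendsto (fun m => limsupSqAvg A (ξ m - ζ)) atTop (𝓝 0) := by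
  obtain ⟨m₀, hm₀, -⟩ := (hζ 1 one_pos).exists
  have hζA : SquareAverageable A ζ := by simpa only [sub_sub_cancel] using (hSA m₀).sub hm₀
  refine ⟨hζA, tendsto_order.2 ⟨fun a ha => Eventually.of_forall fun m =>
    ha.trans_le (limsupSqAvg_nonneg ((hSA m).sub hζA)), fun b hb => ?_⟩⟩
  obtain ⟨M, hM⟩ := hCauchy (b / 8) (by positivity)
  obtain ⟨m', ⟨-, hm'ζ⟩, hm'M⟩ :=
    ((hζ (b / 8) (by positivity)).and_eventually (eventually_ge_atTop M)).exists
  filter_upwards [eventually_ge_atTop M] with m hm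
  have hmm' := ((hSA m).sub (hSA m')).eventually_lt_of_limsupSqAvg_lt (hM m hm m' hm'M)
  calc limsupSqAvg A (ξ m - ζ) ≤ 2 * (b / 8) + 2 * (b / 8) :=
        limsupSqAvg_le_of_eventually_le <| (hmm'.and hm'ζ).mono fun q hq =>
          (sqAvg_sub_le _ _ (ξ m') _).trans (by linarith [hq.1, hq.2])
    _ < b := by linarith

end SquareAverages

section Completeness

variable {G H : Type*} [SeminormedAddCommGroup H] {A : ℕ → Finset G} {ξ : ℕ → G → H}

theorem inv_card_mul_sum_sub_glued_le (s : Finset G) (c : G → ℕ) (x : ℕ → G → H) (j : ℕ)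
    (hx : ∀ l, (#s : ℝ)⁻¹ * ∑ g ∈ s with l < c g, ‖x l g - x (l + 1) g‖ ^ 2 ≤ (1 / 4) ^ l) :
    (#s : ℝ)⁻¹ * ∑ g ∈ s with j ≤ c g, ‖x j g - x (c g) g‖ ^ 2 ≤ 4 * (1 / 4) ^ j := by
  set d : ℕ → G → ℝ := fun l g => ‖x l g - x (l + 1) g‖ ^ 2
  have hswap : ∑ g ∈ s with j ≤ c g, ∑ l ∈ Ico j (c g), 2 ^ l * d l g =
      ∑ l ∈ Ico j (s.sup c), 2 ^ l * ∑ g ∈ s with l < c g, d l g := by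
    simp only [mul_sum]
    refine sum_comm' fun g l => ?_
    simp only [mem_filter, mem_Ico]
    constructor
    · rintro ⟨⟨hg, -⟩, hjl, hlc⟩
      exact ⟨⟨hg, hlc⟩, hjl, hlc.trans_le (le_sup hg)⟩
    · rintro ⟨⟨hg, hlc⟩, hjl, -⟩
      exact ⟨⟨hg, hjl.trans hlc.le⟩, hjl, hlc⟩
  calc (#s : ℝ)⁻¹ * ∑ g ∈ s with j ≤ c g, ‖x j g - x (c g) g‖ ^ 2
      ≤ (#s : ℝ)⁻¹ * ∑ g ∈ s with j ≤ c g,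
          2 * (1 / 2) ^ j * ∑ l ∈ Ico j (c g), 2 ^ l * d l g := by
        gcongr with g hg
        exact norm_sub_sq_le_weighted_sum (fun l => x l g) (mem_filter.1 hg).2
    _ = 2 * (1 / 2) ^ j *
          ∑ l ∈ Ico j (s.sup c), 2 ^ l * ((#s : ℝ)⁻¹ * ∑ g ∈ s with l < c g, d l g) := by
        rw [← mul_sum, hswap, mul_left_comm, mul_sum]
        simp only [mul_left_comm]
    _ ≤ 2 * (1 / 2) ^ j * ∑ l ∈ Ico j (s.sup c), (1 / 2) ^ l := by
        gcongr with l
        calc 2 ^ l * ((#s : ℝ)⁻¹ * ∑ g ∈ s with l < c g, d l g) ≤ 2 ^ l * (1 / 4) ^ l := by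
              gcongr; exact hx l
          _ = (1 / 2) ^ l := by rw [← mul_pow]; norm_num
    _ ≤ 2 * (1 / 2) ^ j * (2 * (1 / 2) ^ j) := by gcongr; exact sum_Ico_half_pow_le _ _
    _ = 4 * (1 / 4) ^ j := by
        rw [show (1 / 4 : ℝ) = 1 / 2 * (1 / 2) by norm_num, mul_pow]; ring

theorem exists_stage_index (A : ℕ → Finset G) (Q : ℕ → ℕ) :
    ∃ c : G → ℕ, (∀ {q l g}, g ∈ A q → l < c g → Q l ≤ q) ∧
      ∀ j, ∃ K : Finset G, ∀ {q g}, g ∈ A q → c g < j → g ∈ K := by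
  classical
  set B : ℕ → Finset G := fun l => (range (Q l + l)).biUnion A
  have hB : ∀ {q l g}, g ∈ A q → q < Q l + l → g ∈ B l := fun hg hq =>
    mem_biUnion.2 ⟨_, mem_range.2 hq, hg⟩
  refine ⟨fun g => sInf {l | g ∈ B l}, fun hg hlc => ?_,
    fun j => ⟨(range j).biUnion B, fun {q g} hg hgj => ?_⟩⟩
  · by_contra! hq
    exact Nat.notMem_of_lt_sInf hlc (hB hg (by omega))
  · exact mem_biUnion.2 ⟨_, mem_range.2 hgj,
      Nat.sInf_mem (s := {l | g ∈ B l}) ⟨q + 1, hB hg (by omega)⟩⟩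

theorem exists_glued_limit (hA : Tendsto (fun q => (#(A q) : ℝ)⁻¹) atTop (𝓝 0))
    (x : ℕ → G → H) (hx : ∀ l, ∀ᶠ q in atTop, sqAvg (A q) (x l - x (l + 1)) ≤ (1 / 4) ^ l) :
    ∃ ζ : G → H, ∀ j, SquareAverageable A (x j - ζ) ∧
      ∀ᶠ q in atTop, sqAvg (A q) (x j - ζ) ≤ 5 * (1 / 4) ^ j := by
  choose Q hQ using fun l => eventually_atTop.1 (hx l)
  obtain ⟨c, hcQ, hK⟩ := exists_stage_index A Q
  choose K hK using hK
  have htail : ∀ q l,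
      (#(A q) : ℝ)⁻¹ * ∑ g ∈ A q with l < c g, ‖x l g - x (l + 1) g‖ ^ 2 ≤ (1 / 4) ^ l := by
    intro q l
    by_cases hq : Q l ≤ q
    · refine le_trans ?_ (hQ l q hq)
      unfold sqAvg
      gcongr
      exact sum_le_sum_of_subset_of_nonneg (filter_subset _ _) fun _ _ _ => by positivity
    · rw [filter_false_of_mem (p := fun g => l < c g) fun g hg hlc => hq (hcQ hg hlc),
        sum_empty, mul_zero]
      positivity
  set C : ℕ → ℝ := fun j => ∑ g ∈ K j, ‖x j g - x (c g) g‖ ^ 2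
  have hsplit : ∀ j q, sqAvg (A q) (x j - fun g => x (c g) g) ≤
      (#(A q) : ℝ)⁻¹ * C j + 4 * (1 / 4) ^ j := by
    intro j q
    rw [sqAvg, ← sum_filter_add_sum_filter_not (A q) (fun g => c g < j), mul_add]
    simp only [not_lt, Pi.sub_apply]
    gcongr ?_ + ?_
    · gcongr
      refine sum_le_sum_of_subset_of_nonneg (fun g hg => ?_) fun _ _ _ => by positivity
      obtain ⟨hgA, hgj⟩ := mem_filter.1 hg
      exact hK j hgA hgj
    · exact inv_card_mul_sum_sub_glued_le (A q) c x j (htail q)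
  refine ⟨fun g => x (c g) g, fun j => ⟨⟨C j + 4 * (1 / 4) ^ j,
    Set.forall_mem_range.2 fun q => (hsplit j q).trans ?_⟩, ?_⟩⟩
  · gcongr
    exact mul_le_of_le_one_left (sum_nonneg fun _ _ => by positivity) (Nat.cast_inv_le_one _)
  · have hC := hA.mul_const (C j)
    rw [zero_mul] at hC
    filter_upwards [hC.eventually (ge_mem_nhds (by positivity : (0 : ℝ) < (1 / 4) ^ j))]
      with q hq
    linarith [hsplit j q]

theorem IsSqAvgCauchy.exists_strictMono_sqAvg_le (hSA : ∀ m, SquareAverageable A (ξ m))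
    (hCauchy : IsSqAvgCauchy A ξ) : ∃ φ : ℕ → ℕ, StrictMono φ ∧
      ∀ l, ∀ᶠ q in atTop, sqAvg (A q) (ξ (φ l) - ξ (φ (l + 1))) ≤ (1 / 4) ^ l := by
  have hev : ∀ l, ∀ᶠ M in atTop, ∀ m ≥ M, ∀ k ≥ M,
      limsupSqAvg A (ξ m - ξ k) < (1 / 4) ^ l := fun l => by
    obtain ⟨M, hM⟩ := hCauchy ((1 / 4) ^ l) (by positivity)
    exact eventually_atTop.2 ⟨M, fun M' hM' m hm k hk => hM m (hM'.trans hm) k (hM'.trans hk)⟩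
  obtain ⟨φ, hφ, hφC⟩ := extraction_forall_of_eventually hev
  refine ⟨φ, hφ, fun l => ?_⟩
  have hlt := hφC l _ le_rfl _ (hφ.monotone l.le_succ)
  exact (((hSA _).sub (hSA _)).eventually_lt_of_limsupSqAvg_lt hlt).mono fun _ => le_of_lt

theorem exists_limit_of_tendsto_card (hA : Tendsto (fun q => #(A q)) atTop atTop)
    (hSA : ∀ m, SquareAverageable A (ξ m)) (hCauchy : IsSqAvgCauchy A ξ) :
    ∃ ζ : G → H, SquareAverageable A ζ ∧
      Tendsto (fun m => limsupSqAvg A (ξ m - ζ)) atTop (𝓝 0) := by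
  obtain ⟨φ, hφ, hfast⟩ := hCauchy.exists_strictMono_sqAvg_le hSA
  obtain ⟨ζ, hζ⟩ := exists_glued_limit
    (tendsto_natCast_atTop_atTop.comp hA).inv_tendsto_atTop (fun l => ξ (φ l)) hfast
  refine ⟨ζ, tendsto_limsupSqAvg_of_frequently hSA hCauchy fun ε hε =>
    hφ.tendsto_atTop.frequently ?_⟩
  have hsmall : ∀ᶠ j in atTop, 5 * (1 / 4 : ℝ) ^ j < ε := by
    have h := (tendsto_pow_atTop_nhds_zero_of_lt_one (r := (1 / 4 : ℝ)) (by norm_num)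
      (by norm_num)).const_mul 5
    rw [mul_zero] at h
    exact h.eventually (gt_mem_nhds hε)
  exact (hsmall.mono fun j hj => ⟨(hζ j).1, (hζ j).2.mono fun _ hq => hq.trans_lt hj⟩).frequently

theorem exists_limit_of_eventually_eq_univ [CompleteSpace H] [Fintype G]
    (hA : ∀ᶠ q in atTop, A q = univ) (hCauchy : IsSqAvgCauchy A ξ) :
    ∃ ζ : G → H, SquareAverageable A ζ ∧
      Tendsto (fun m => limsupSqAvg A (ξ m - ζ)) atTop (𝓝 0) := by
  have hlim : ∀ u : G → H, limsupSqAvg A u = sqAvg univ u := fun u =>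
    (limsup_congr (hA.mono fun q hq => by rw [hq])).trans (limsup_const _)
  have hpt : ∀ g, CauchySeq fun m => ξ m g := by
    intro g
    have hG : (0 : ℝ) < Fintype.card G := Nat.cast_pos.2 (Fintype.card_pos_iff.2 ⟨g⟩)
    refine Metric.cauchySeq_iff.2 fun ε hε => ?_
    obtain ⟨M, hM⟩ := hCauchy (ε ^ 2 / Fintype.card G) (by positivity)
    refine ⟨M, fun m hm k hk => ?_⟩
    have h := hM m hm k hk
    rw [hlim, lt_div_iff₀ hG] at h
    rw [dist_eq_norm, ← pow_lt_pow_iff_left₀ (norm_nonneg _) hε.le two_ne_zero]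
    have hg := norm_sq_le_card_mul_sqAvg_univ (ξ m - ξ k) g
    rw [Pi.sub_apply] at hg
    linarith
  choose ζ hζ using fun g => cauchySeq_tendsto_of_complete (hpt g)
  refine ⟨ζ, .of_fintype ζ, ?_⟩
  have hsq : ∀ g, Tendsto (fun m => ‖(ξ m - ζ) g‖ ^ 2) atTop (𝓝 0) := fun g => by
    simpa using (tendsto_iff_norm_sub_tendsto_zero.1 (hζ g)).pow 2
  simpa only [hlim, sqAvg, sum_const_zero, mul_zero] using
    (tendsto_finsetSum univ fun g _ => hsq g).const_mul ((#univ : ℝ)⁻¹)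

end Completeness

section Folner

variable {G : Type*} [Group G] [DecidableEq G]

def IsRightFolner (F : ℕ → Finset G) : Prop :=
  ∀ g : G, Tendsto (fun n => (#((F n \ (F n).image (· * g)) ∪ ((F n).image (· * g) \ F n)) : ℝ) /
    #(F n)) atTop (𝓝 0)

theorem card_le_card_of_image_mul_right_eq {s T : Finset G} (hs : s.Nonempty)
    (h : ∀ g ∈ T, s.image (· * g) = s) : #T ≤ #s := by
  obtain ⟨a, ha⟩ := hs
  refine card_le_card_of_injOn (a * ·) (fun g hg => ?_) (mul_right_injective a).injOn
  rw [mem_coe, ← h g hg]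
  exact mem_image_of_mem _ ha

theorem image_mul_right_eq_of_card_symmDiff_lt {s : Finset G} {g : G}
    (h : (#((s \ s.image (· * g)) ∪ (s.image (· * g) \ s)) : ℝ) / #s < (#s : ℝ)⁻¹) :
    s.image (· * g) = s := by
  have hs : (0 : ℝ) < #s := by
    by_contra h0
    simp_all
  rw [div_lt_iff₀ hs, inv_mul_cancel₀ hs.ne', Nat.cast_lt_one, card_eq_zero, union_eq_empty,
    sdiff_eq_empty_iff_subset, sdiff_eq_empty_iff_subset] at h
  exact h.2.antisymm h.1

variable {F : ℕ → Finset G}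

theorem IsRightFolner.eventually_card_le (hF : IsRightFolner F) (hne : ∀ n, (F n).Nonempty)
    (T : Finset G) : ∀ᶠ n in atTop, #T ≤ #(F n) := by
  rcases T.eq_empty_or_nonempty with rfl | hT
  · exact Eventually.of_forall fun _ => by simp
  have hev := (eventually_all_finset T).2 fun g _ =>
    (hF g).eventually (gt_mem_nhds (inv_pos.2 (Nat.cast_pos.2 hT.card_pos)))
  filter_upwards [hev] with n hn
  by_contra! hlt
  refine hlt.not_ge (card_le_card_of_image_mul_right_eq (hne n) fun g hg => ?_)
  refine image_mul_right_eq_of_card_symmDiff_lt ((hn g hg).trans_le ?_)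
  gcongr

theorem IsRightFolner.tendsto_card [Infinite G] (hF : IsRightFolner F)
    (hne : ∀ n, (F n).Nonempty) : Tendsto (fun n => #(F n)) atTop atTop :=
  tendsto_atTop.2 fun k => by
    obtain ⟨T, rfl⟩ := Infinite.exists_subset_card_eq G k
    exact hF.eventually_card_le hne T

theorem IsRightFolner.eventually_eq_univ [Fintype G] (hF : IsRightFolner F)
    (hne : ∀ n, (F n).Nonempty) : ∀ᶠ n in atTop, F n = univ :=
  (hF.eventually_card_le hne univ).mono fun _ hn =>
    eq_univ_of_card _ ((card_le_univ _).antisymm (card_univ (α := G) ▸ hn))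

end Folner

theorem square_averageable_complete_general
    {G : Type*} [Group G] [DecidableEq G]
    {H : Type*} [NormedAddCommGroup H] [CompleteSpace H]
    (F : ℕ → Finset G) (hne : ∀ n, (F n).Nonempty)
    (hFolner : ∀ g : G, Tendsto
      (fun n : ℕ => ((((F n) \ ((F n).image (· * g))) ∪
          (((F n).image (· * g)) \ F n)).card : ℝ) / ((F n).card : ℝ)) atTop (nhds 0))
    (Nq : ℕ → ℕ) (hNq : StrictMono Nq)
    (ξ : ℕ → G → H)
    -- each ξ m is square-averageable along (F (Nq q))
    (hSA : ∀ m : ℕ, BddAbove (Set.range fun q : ℕ =>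
      ((F (Nq q)).card : ℝ)⁻¹ * ∑ g ∈ F (Nq q), ‖ξ m g‖ ^ 2))
    -- (ξ m) is Cauchy for the averaged seminorm
    (hCauchy : ∀ ε : ℝ, 0 < ε → ∃ M : ℕ, ∀ m ≥ M, ∀ k ≥ M,
      Filter.limsup (fun q : ℕ =>
        ((F (Nq q)).card : ℝ)⁻¹ * ∑ g ∈ F (Nq q), ‖ξ m g - ξ k g‖ ^ 2) atTop < ε) :
    ∃ ζ : G → H,
      BddAbove (Set.range fun q : ℕ =>
        ((F (Nq q)).card : ℝ)⁻¹ * ∑ g ∈ F (Nq q), ‖ζ g‖ ^ 2) ∧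
      Tendsto (fun m : ℕ => Filter.limsup (fun q : ℕ =>
        ((F (Nq q)).card : ℝ)⁻¹ * ∑ g ∈ F (Nq q), ‖ξ m g - ζ g‖ ^ 2) atTop)
        atTop (nhds 0) := by
  rcases finite_or_infinite G with _ | _
  · cases nonempty_fintype G
    exact exists_limit_of_eventually_eq_univ
      (hNq.tendsto_atTop.eventually (IsRightFolner.eventually_eq_univ hFolner hne)) hCauchy
  · exact exists_limit_of_tendsto_card
      ((IsRightFolner.tendsto_card hFolner hne).comp hNq.tendsto_atTop) hSA hCauchy

/-- Completeness of the space of square-averageable `H`-valued sequences on `G`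
(modulo null sequences) with respect to the averaged `L²`-seminorm along a
subsequence `(F_{N_q})` of a Følner sequence: every Cauchy sequence has a limit. -/
theorem square_averageable_complete
    {G : Type*} [Group G] [Countable G] [DecidableEq G]
    {H : Type*} [NormedAddCommGroup H] [InnerProductSpace ℂ H] [CompleteSpace H]
    (F : ℕ → Finset G) (hne : ∀ n, (F n).Nonempty)
    (hFolner : ∀ g : G, Tendsto
      (fun n : ℕ => ((((F n) \ ((F n).image (· * g))) ∪
          (((F n).image (· * g)) \ F n)).card : ℝ) / ((F n).card : ℝ)) atTop (nhds 0))
    (Nq : ℕ → ℕ) (hNq : StrictMono Nq)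
    (ξ : ℕ → G → H)
    -- each ξ m is square-averageable along (F (Nq q))
    (hSA : ∀ m : ℕ, BddAbove (Set.range fun q : ℕ =>
      ((F (Nq q)).card : ℝ)⁻¹ * ∑ g ∈ F (Nq q), ‖ξ m g‖ ^ 2))
    -- (ξ m) is Cauchy for the averaged seminorm
    (hCauchy : ∀ ε : ℝ, 0 < ε → ∃ M : ℕ, ∀ m ≥ M, ∀ k ≥ M,
      Filter.limsup (fun q : ℕ =>
        ((F (Nq q)).card : ℝ)⁻¹ * ∑ g ∈ F (Nq q), ‖ξ m g - ξ k g‖ ^ 2) atTop < ε) :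
    ∃ ζ : G → H,
      BddAbove (Set.range fun q : ℕ =>
        ((F (Nq q)).card : ℝ)⁻¹ * ∑ g ∈ F (Nq q), ‖ζ g‖ ^ 2) ∧
      Tendsto (fun m : ℕ => Filter.limsup (fun q : ℕ =>
        ((F (Nq q)).card : ℝ)⁻¹ * ∑ g ∈ F (Nq q), ‖ξ m g - ζ g‖ ^ 2) atTop)
        atTop (nhds 0) :=
  square_averageable_complete_general F hne hFolner Nq hNq ξ hSA hCauchy
end
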